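/- arXiv:2605.14627 — 6 statements merged into one kernel-verified Lean document; each statement's English description precedes it below -/
import Mathlib

section
/- For every triangle-free graph H, the spectral radius of its adjacency matrix satisfies ρ(H) ≤ √(e(H)), where e(H) is the number of edges of H. -/
open Matrix Finset SimpleGraph
open scoped Classical

/-- The spectral radius (largest adjacency eigenvalue) of a finite simple graph,
expressed as the supremum of the Rayleigh quotient over unit vectors. -/
noncomputable def specRad {V : Type*} [Fintype V] (G : SimpleGraph V) : ℝ :=
  ⨆ x : {x : V → ℝ // ∑ v, x v ^ 2 = 1},
    dotProduct x.1 ((G.adjMatrix ℝ).mulVec x.1)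

lemma key_rayleigh {V : Type*} [Fintype V] [DecidableEq V] (G : SimpleGraph V)
    [DecidableRel G.Adj] (h : G.CliqueFree 3) (x : V → ℝ) (hx : ∑ v, x v ^ 2 = 1) :
    dotProduct x ((G.adjMatrix ℝ).mulVec x) ≤ Real.sqrt G.edgeFinset.card := by
  classical
  set A : V → V → ℝ := fun u v => if G.Adj u v then 1 else 0 with hA
  set y : V → ℝ := fun u => x u ^ 2 with hy
  set s : V → ℝ := fun u => ∑ v, A u v * y v with hs
  have hy0 : ∀ u, 0 ≤ y u := fun u => sq_nonneg _
  have hA0 : ∀ u v, 0 ≤ A u v := by intro u v; simp only [hA]; split <;> norm_num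
  have hAsq : ∀ u v, A u v * A u v = A u v := by
    intro u v; simp only [hA]; split <;> norm_num
  have hAsymm : ∀ u v, A u v = A v u := by
    intro u v; simp only [hA, G.adj_comm]
  have hs0 : ∀ u, 0 ≤ s u := fun u =>
    Finset.sum_nonneg fun v _ => mul_nonneg (hA0 u v) (hy0 v)
  -- claim1 : adjacent vertices have neighborhood weights summing to ≤ 1
  have claim1 : ∀ u v, G.Adj u v → s u + s v ≤ 1 := by
    intro u v huv
    have : s u + s v = ∑ w, (A u w + A v w) * y w := by
      simp only [hs, ← Finset.sum_add_distrib, add_mul]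
    rw [this, ← hx]
    apply Finset.sum_le_sum
    intro w _
    have hle : A u w + A v w ≤ 1 := by
      simp only [hA]
      split_ifs with h1 h2 h2 <;> try norm_num
      exact absurd (SimpleGraph.is3Clique_triple_iff.mpr ⟨huv, h1, h2⟩) (h _)
    calc (A u w + A v w) * y w ≤ 1 * y w :=
          mul_le_mul_of_nonneg_right hle (hy0 w)
      _ = x w ^ 2 := by rw [one_mul]
  set S : ℝ := ∑ u, y u * s u with hS
  have hS0 : 0 ≤ S := Finset.sum_nonneg fun u _ => mul_nonneg (hy0 u) (hs0 u)
  -- claim2 : ∑ y u * s u ^2 ≤ S / 2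
  have claim2 : ∑ u, y u * s u ^ 2 ≤ S / 2 := by
    have hT : ∑ u, y u * s u ^ 2 = ∑ u, ∑ v, A u v * (y u * y v * s u) := by
      apply Finset.sum_congr rfl
      intro u _
      have : y u * s u ^ 2 = (∑ v, A u v * y v) * (y u * s u) := by
        simp only [hs]; ring
      rw [this, Finset.sum_mul]
      apply Finset.sum_congr rfl
      intro v _; ring
    have hT' : ∑ u, y u * s u ^ 2 = ∑ u, ∑ v, A u v * (y u * y v * s v) := by
      rw [hT, Finset.sum_comm]
      apply Finset.sum_congr rfl; intro u _
      apply Finset.sum_congr rfl; intro v _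
      rw [hAsymm v u]; ring
    have h2T : 2 * ∑ u, y u * s u ^ 2
        = ∑ u, ∑ v, A u v * (y u * y v * (s u + s v)) := by
      rw [two_mul]
      nth_rewrite 1 [hT]
      rw [hT', ← Finset.sum_add_distrib]
      apply Finset.sum_congr rfl; intro u _
      rw [← Finset.sum_add_distrib]
      apply Finset.sum_congr rfl; intro v _; ring
    have hbound : ∑ u, ∑ v, A u v * (y u * y v * (s u + s v)) ≤ S := by
      have hSeq : S = ∑ u, ∑ v, A u v * (y u * y v) := by
        apply Finset.sum_congr rfl; intro u _
        simp only [hs, Finset.mul_sum]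
        apply Finset.sum_congr rfl; intro v _; ring
      rw [hSeq]
      apply Finset.sum_le_sum; intro u _
      apply Finset.sum_le_sum; intro v _
      by_cases huv : G.Adj u v
      · have hA1 : A u v = 1 := by simp [hA, huv]
        rw [hA1, one_mul, one_mul]
        calc y u * y v * (s u + s v) ≤ y u * y v * 1 :=
              mul_le_mul_of_nonneg_left (claim1 u v huv)
                (mul_nonneg (hy0 u) (hy0 v))
          _ = y u * y v := mul_one _
      · have hA1 : A u v = 0 := by simp [hA, huv]
        rw [hA1, zero_mul, zero_mul]
    linarith
  -- claim3 : Cauchy-Schwarz gives S^2 ≤ ∑ y u * s u ^2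
  have claim3 : S ^ 2 ≤ ∑ u, y u * s u ^ 2 := by
    have hcs := Finset.sum_mul_sq_le_sq_mul_sq Finset.univ x (fun u => x u * s u)
    have h1 : (∑ u, x u * (x u * s u)) = S := by
      apply Finset.sum_congr rfl; intro u _; simp only [hy]; ring
    have h2 : (∑ u, (x u * s u) ^ 2) = ∑ u, y u * s u ^ 2 := by
      apply Finset.sum_congr rfl; intro u _; simp only [hy]; ring
    rw [h1, h2, hx, one_mul] at hcs
    exact hcs
  have hShalf : S ≤ 1 / 2 := by nlinarith [claim2, claim3, hS0]
  -- rewrite the Rayleigh quotient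
  have hR : dotProduct x ((G.adjMatrix ℝ).mulVec x)
      = ∑ p ∈ Finset.univ ×ˢ Finset.univ, A p.1 p.2 * (x p.1 * x p.2) := by
    rw [Finset.sum_product]
    simp only [dotProduct, Matrix.mulVec, SimpleGraph.adjMatrix_apply,
      dotProduct]
    apply Finset.sum_congr rfl; intro u _
    rw [Finset.mul_sum]
    apply Finset.sum_congr rfl; intro v _
    simp only [hA]; ring
  set R : ℝ := dotProduct x ((G.adjMatrix ℝ).mulVec x) with hRdef
  -- edge count
  have hcount : ∑ p ∈ Finset.univ ×ˢ Finset.univ, A p.1 p.2 * A p.1 p.2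
      = 2 * (G.edgeFinset.card : ℝ) := by
    rw [Finset.sum_product]
    have : ∀ u, ∑ v, A u v * A u v = (G.degree u : ℝ) := by
      intro u
      simp only [hAsq]
      simp [hA, Finset.sum_boole, SimpleGraph.degree, SimpleGraph.neighborFinset_eq_filter]
    rw [Finset.sum_congr rfl (fun u _ => this u)]
    rw [← Nat.cast_sum]
    rw [SimpleGraph.sum_degrees_eq_twice_card_edges]
    push_cast; ring
  have hSprod : ∑ p ∈ Finset.univ ×ˢ Finset.univ,
      (A p.1 p.2 * (x p.1 * x p.2)) ^ 2 ≤ S := by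
    rw [Finset.sum_product]
    have hSeq : S = ∑ u, ∑ v, A u v * (y u * y v) := by
      apply Finset.sum_congr rfl; intro u _
      simp only [hs, Finset.mul_sum]
      apply Finset.sum_congr rfl; intro v _; ring
    rw [hSeq]
    apply Finset.sum_le_sum; intro u _
    apply Finset.sum_le_sum; intro v _
    by_cases huv : G.Adj u v
    · have hA1 : A u v = 1 := by simp [hA, huv]
      rw [hA1]; simp only [hy]; ring_nf; rfl
    · have hA1 : A u v = 0 := by simp [hA, huv]
      rw [hA1]; simp
  -- Cauchy–Schwarz over pairs
  have hcs2 := Finset.sum_mul_sq_le_sq_mul_sq (Finset.univ ×ˢ Finset.univ)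
    (fun p : V × V => A p.1 p.2) (fun p : V × V => A p.1 p.2 * (x p.1 * x p.2))
  have hfg : (∑ p ∈ Finset.univ ×ˢ Finset.univ,
      A p.1 p.2 * (A p.1 p.2 * (x p.1 * x p.2))) = R := by
    rw [hR]
    apply Finset.sum_congr rfl; intro p _
    rw [← mul_assoc, hAsq]
  have hff : (∑ p ∈ Finset.univ ×ˢ Finset.univ, (A p.1 p.2) ^ 2)
      = 2 * (G.edgeFinset.card : ℝ) := by
    rw [← hcount]
    apply Finset.sum_congr rfl; intro p _; ring
  rw [hfg, hff] at hcs2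
  have hR2 : R ^ 2 ≤ (G.edgeFinset.card : ℝ) := by
    have hm0 : (0:ℝ) ≤ (G.edgeFinset.card : ℝ) := Nat.cast_nonneg _
    calc R ^ 2 ≤ 2 * (G.edgeFinset.card : ℝ) *
          ∑ p ∈ Finset.univ ×ˢ Finset.univ, (A p.1 p.2 * (x p.1 * x p.2)) ^ 2 := hcs2
      _ ≤ 2 * (G.edgeFinset.card : ℝ) * S := by
          apply mul_le_mul_of_nonneg_left hSprod; positivity
      _ ≤ 2 * (G.edgeFinset.card : ℝ) * (1/2) := by
          apply mul_le_mul_of_nonneg_left hShalf; positivity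
      _ = (G.edgeFinset.card : ℝ) := by ring
  rcases le_or_gt R 0 with hRneg | hRpos
  · exact hRneg.trans (Real.sqrt_nonneg _)
  · rw [show R = Real.sqrt (R ^ 2) by rw [Real.sqrt_sq hRpos.le]]
    exact Real.sqrt_le_sqrt hR2

/-- Nosal's theorem: a triangle-free graph has spectral radius at most √(e(G)). -/
theorem stmt0 {V : Type*} [Fintype V] [DecidableEq V] (G : SimpleGraph V)
    [DecidableRel G.Adj] (h : G.CliqueFree 3) :
    specRad G ≤ Real.sqrt G.edgeFinset.card := by
  apply Real.iSup_le _ (Real.sqrt_nonneg _)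
  rintro ⟨x, hx⟩
  have h2 := key_rayleigh G h x hx
  have hAeq : (G.adjMatrix ℝ)
      = @SimpleGraph.adjMatrix ℝ V G (fun a b => Classical.propDecidable _) _ _ := by
    ext u v
    by_cases hadj : G.Adj u v <;> simp [SimpleGraph.adjMatrix_apply, hadj]
  simpa [← hAeq] using h2
end

section
/- For any vertex u of a graph G, ρ(G)² ≤ ρ(G − u)² + 2·d_G(u), where G − u is the graph obtained by deleting u and d_G(u) is the degree of u. -/
open Matrix Finset SimpleGraph
open scoped Classical

/-!
Take a unit vector `x` and put `t = x u`, `S = ∑_{v ~ u} x v`. Splitting off the row and column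
of `u`, the Rayleigh quotient is `xᵀ A' x' + 2 t S ≤ ρ(G - u) (1 - t²) + 2 t S`, and
Cauchy–Schwarz gives `S² ≤ d(u) (1 - t²)`. A polynomial inequality in `t` and `S` bounds the
square of the right-hand side by `ρ(G - u)² + 2 d(u)`.
-/

lemma sq_mul_one_sub_sq_add_two_mul_le {r d t S : ℝ} (hd : 0 ≤ d) (ht : t ^ 2 ≤ 1)
    (hS : S ^ 2 ≤ d * (1 - t ^ 2)) :
    (r * (1 - t ^ 2) + 2 * t * S) ^ 2 ≤ r ^ 2 + 2 * d := by
  -- r² + 2d - (r s + 2 t S)² = (r² + 2d) t⁴ + 2 s (r t - S)² + (2 s + 4 t²) (d s - S²), s = 1 - t²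
  nlinarith [mul_nonneg (pow_nonneg (sq_nonneg t) 2)
      (add_nonneg (sq_nonneg r) (mul_nonneg zero_le_two hd)),
    mul_nonneg (sub_nonneg.2 ht) (sq_nonneg (r * t - S)),
    mul_nonneg (add_nonneg (sub_nonneg.2 ht) (mul_nonneg zero_le_two (sq_nonneg t)))
      (sub_nonneg.2 hS)]

lemma sum_eq_add_sum_setOf_ne {α M : Type*} [Fintype α] [AddCommMonoid M] (u : α) (f : α → M) :
    ∑ v, f v = f u + ∑ v : ({v | v ≠ u} : Set α), f v :=
  Fintype.sum_eq_add_sum_subtype_ne f u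

namespace SimpleGraph

variable {V : Type*} [Fintype V]

lemma bddAbove_rayleigh (G : SimpleGraph V) :
    BddAbove (Set.range fun x : {x : V → ℝ // ∑ v, x v ^ 2 = 1} =>
      x.1 ⬝ᵥ G.adjMatrix ℝ *ᵥ x.1) := by
  refine ⟨2 * Fintype.card V, ?_⟩
  rintro _ ⟨⟨x, hx⟩, rfl⟩
  have hterm : ∀ v w, x v * (G.adjMatrix ℝ v w * x w) ≤ x v ^ 2 + x w ^ 2 := by
    intro v w
    rw [adjMatrix_apply]
    split_ifs
    · nlinarith [sq_nonneg (x v - x w)]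
    · rw [zero_mul, mul_zero]; positivity
  calc x ⬝ᵥ G.adjMatrix ℝ *ᵥ x = ∑ v, ∑ w, x v * (G.adjMatrix ℝ v w * x w) := by
        simp only [dotProduct, mulVec, mul_sum]
    _ ≤ ∑ v, ∑ w, (x v ^ 2 + x w ^ 2) := by gcongr with v _ w _; exact hterm v w
    _ = 2 * Fintype.card V := by
        simp only [sum_add_distrib, sum_const, ← mul_sum, hx, card_univ, nsmul_eq_mul]
        ring

lemma rayleigh_le_specRad (G : SimpleGraph V) {x : V → ℝ} (hx : ∑ v, x v ^ 2 = 1) :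
    x ⬝ᵥ G.adjMatrix ℝ *ᵥ x ≤ specRad G :=
  le_ciSup (bddAbove_rayleigh G) ⟨x, hx⟩

lemma rayleigh_le_specRad_mul (G : SimpleGraph V) (x : V → ℝ) :
    x ⬝ᵥ G.adjMatrix ℝ *ᵥ x ≤ specRad G * ∑ v, x v ^ 2 := by
  rcases (sum_nonneg fun v _ => sq_nonneg (x v) : 0 ≤ ∑ v, x v ^ 2).eq_or_lt with h0 | hpos
  · have : x = 0 := funext fun v =>
      pow_eq_zero_iff two_ne_zero |>.mp <|
        (sum_eq_zero_iff_of_nonneg fun i _ => sq_nonneg (x i)).mp h0.symm v (mem_univ v)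
    simp [this]
  · set c := (√(∑ v, x v ^ 2))⁻¹
    have hc : c ^ 2 * ∑ v, x v ^ 2 = 1 := by
      rw [inv_pow, Real.sq_sqrt hpos.le, inv_mul_cancel₀ hpos.ne']
    have h := rayleigh_le_specRad G (x := c • x) (by
      simp only [Pi.smul_apply, smul_eq_mul, mul_pow, ← mul_sum]; exact hc)
    rw [mulVec_smul, dotProduct_smul, smul_dotProduct, smul_eq_mul, smul_eq_mul, ← mul_assoc,
      ← sq] at h
    have := mul_le_mul_of_nonneg_right h hpos.le
    rwa [mul_right_comm, hc, one_mul] at this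

lemma specRad_le [Nonempty V] (G : SimpleGraph V) {c : ℝ}
    (h : ∀ x : V → ℝ, ∑ v, x v ^ 2 = 1 → x ⬝ᵥ G.adjMatrix ℝ *ᵥ x ≤ c) : specRad G ≤ c :=
  have : Nonempty {x : V → ℝ // ∑ v, x v ^ 2 = 1} :=
    ⟨⟨Pi.single (Classical.arbitrary V) 1, by simp [Pi.single_apply]⟩⟩
  ciSup_le fun x => h x.1 x.2

lemma specRad_nonneg [Nonempty V] (G : SimpleGraph V) : 0 ≤ specRad G := by
  obtain ⟨v⟩ := ‹Nonempty V›
  simpa using rayleigh_le_specRad G (x := Pi.single v 1) (by simp [Pi.single_apply])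

lemma rayleigh_eq_induce_ne_add (G : SimpleGraph V) (u : V) (x : V → ℝ) :
    x ⬝ᵥ G.adjMatrix ℝ *ᵥ x =
      (fun v : ({v | v ≠ u} : Set V) => x v) ⬝ᵥ
          (G.induce {v | v ≠ u}).adjMatrix ℝ *ᵥ (fun v => x v) +
        2 * x u * ∑ v ∈ G.neighborFinset u, x v := by
  set A := G.adjMatrix ℝ
  have hrow : ∑ v ∈ G.neighborFinset u, x v = ∑ v : ({v | v ≠ u} : Set V), A u v * x v := by
    rw [← adjMatrix_mulVec_apply, mulVec, dotProduct, sum_eq_add_sum_setOf_ne u]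
    simp [A]
  have hcol : ∑ v : ({v | v ≠ u} : Set V), x v * (A v u * x u) =
      x u * ∑ v : ({v | v ≠ u} : Set V), A u v * x v := by
    rw [mul_sum]
    refine sum_congr rfl fun v _ => ?_
    rw [show A v u = A u v from (isSymm_adjMatrix G).apply u v]
    ring
  have hA' : ∀ v w : ({v | v ≠ u} : Set V), (G.induce {v | v ≠ u}).adjMatrix ℝ v w = A v w := by
    intro v w; simp [A]
  have hAuu : A u u = 0 := by simp [A]
  simp only [dotProduct, mulVec, hA']
  simp_rw [sum_eq_add_sum_setOf_ne u, hAuu, mul_add, sum_add_distrib, hcol, hrow]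
  ring

lemma sq_sum_neighborFinset_le (G : SimpleGraph V) (u : V) (x : V → ℝ) :
    (∑ v ∈ G.neighborFinset u, x v) ^ 2 ≤ G.degree u * (∑ v, x v ^ 2 - x u ^ 2) := by
  calc (∑ v ∈ G.neighborFinset u, x v) ^ 2
      ≤ #(G.neighborFinset u) * ∑ v ∈ G.neighborFinset u, x v ^ 2 := sq_sum_le_card_mul_sum_sq
    _ ≤ G.degree u * ∑ v ∈ univ.erase u, x v ^ 2 := by
        rw [card_neighborFinset_eq_degree]
        gcongr
        · exact fun v hv => mem_erase.2 ⟨(G.ne_of_adj ((G.mem_neighborFinset u v).1 hv)).symm,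
            mem_univ v⟩
    _ = G.degree u * (∑ v, x v ^ 2 - x u ^ 2) := by rw [sum_erase_eq_sub (mem_univ u)]

end SimpleGraph

/-- Deleting a vertex: ρ(G)² ≤ ρ(G − u)² + 2·d_G(u). -/
theorem stmt1 {V : Type*} [Fintype V] (G : SimpleGraph V) [DecidableRel G.Adj] (u : V) :
    specRad G ^ 2 ≤ specRad (G.induce {v | v ≠ u}) ^ 2 + 2 * (G.degree u : ℝ) := by
  -- `specRad` is built from the classical instance, so make it the only one in sight.
  obtain rfl := Subsingleton.elim ‹DecidableRel G.Adj› fun _ _ => Classical.propDecidable _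
  have : Nonempty V := ⟨u⟩
  set r := specRad (G.induce {v | v ≠ u})
  have hsub : ∀ x : V → ℝ, ∑ v : ({v | v ≠ u} : Set V), x v ^ 2 = ∑ v, x v ^ 2 - x u ^ 2 :=
    fun x => eq_sub_of_add_eq' (sum_eq_add_sum_setOf_ne u (fun v => x v ^ 2)).symm
  have hρ : specRad G ≤ √(r ^ 2 + 2 * G.degree u) := by
    refine specRad_le G fun x hx => ?_
    have hQ := (G.induce {v | v ≠ u}).rayleigh_le_specRad_mul (fun v => x v)
    have hS := G.sq_sum_neighborFinset_le u x
    rw [hsub, hx] at hQ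
    rw [hx] at hS
    have ht : x u ^ 2 ≤ 1 := hx ▸ single_le_sum (fun v _ => sq_nonneg (x v)) (mem_univ u)
    rw [G.rayleigh_eq_induce_ne_add u x]
    calc _ ≤ r * (1 - x u ^ 2) + 2 * x u * ∑ v ∈ G.neighborFinset u, x v :=
          add_le_add_left hQ _
      _ ≤ √(r ^ 2 + 2 * G.degree u) := le_abs_self _ |>.trans <| Real.abs_le_sqrt <|
        sq_mul_one_sub_sq_add_two_mul_le (by positivity) ht hS
  calc specRad G ^ 2 ≤ √(r ^ 2 + 2 * G.degree u) ^ 2 := by gcongr; exact G.specRad_nonneg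
    _ = r ^ 2 + 2 * G.degree u := Real.sq_sqrt (by positivity)
end

section
/- The Grötzsch graph (the 11-vertex Mycielskian of C_5) is triangle-free and has chromatic number exactly 4. -/
open SimpleGraph

/-- Vertices of the Grötzsch graph: the cycle vertices `v_i`, the
Mycielski vertices `w_i`, and the apex `z`. -/
abbrev GVert := Fin 5 ⊕ Fin 5 ⊕ Unit

/-- Adjacency of the Grötzsch graph (Mycielskian of C₅): `v_i ~ v_{i±1}`,
`w_i ~ v_{i±1}`, and `z ~ w_i` for all `i`. -/
def gAdj : GVert → GVert → Bool
  | .inl i, .inl j => (i == j + 1) || (j == i + 1)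
  | .inl i, .inr (.inl j) => (i == j + 1) || (j == i + 1)
  | .inr (.inl i), .inl j => (i == j + 1) || (j == i + 1)
  | .inr (.inl _), .inr (.inr _) => true
  | .inr (.inr _), .inr (.inl _) => true
  | _, _ => false

/-- The Grötzsch graph, the 11-vertex Mycielskian of the 5-cycle. -/
def grotzsch : SimpleGraph GVert where
  Adj a b := gAdj a b = true
  symm := by
    constructor
    show ∀ a b, gAdj a b = true → gAdj b a = true
    decide
  loopless := by
    constructor
    show ∀ a, ¬ gAdj a a = true
    decide

/-- An explicit proper 4-coloring. -/
def gCol : GVert → Fin 4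
  | .inl i => ![0, 1, 0, 1, 2] i
  | .inr (.inl i) => ![0, 1, 0, 1, 2] i
  | .inr (.inr _) => 3

lemma gCol_valid : ∀ a b : GVert, gAdj a b = true → gCol a ≠ gCol b := by decide

lemma grotzsch_colorable : grotzsch.Colorable 4 :=
  ⟨⟨gCol, fun {a b} h => gCol_valid a b h⟩⟩

/-- No 2-coloring of the odd cycle C₅ (avoiding a fixed third color). -/
lemma c5_no_two_coloring : ∀ a0 a1 a2 a3 a4 z0 : Fin 3,
    ¬(a0 ≠ z0 ∧ a1 ≠ z0 ∧ a2 ≠ z0 ∧ a3 ≠ z0 ∧ a4 ≠ z0 ∧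
      a0 ≠ a1 ∧ a1 ≠ a2 ∧ a2 ≠ a3 ∧ a3 ≠ a4 ∧ a4 ≠ a0) := by decide

lemma adj_vv : ∀ i : Fin 5, gAdj (.inl i) (.inl (i + 1)) = true := by decide
lemma adj_wv : ∀ i : Fin 5, gAdj (.inr (.inl i)) (.inl (i + 1)) = true := by decide
lemma adj_wv' : ∀ i : Fin 5, gAdj (.inr (.inl (i + 1))) (.inl i) = true := by decide
lemma adj_wz : ∀ i : Fin 5, gAdj (.inr (.inl i)) (.inr (.inr ())) = true := by decide

/-- Mycielski's argument: the Grötzsch graph is not 3-colorable. -/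
lemma grotzsch_not_colorable : ¬ grotzsch.Colorable 3 := by
  rintro ⟨c⟩
  set cz : Fin 3 := c (.inr (.inr ())) with hcz
  -- collapse to a coloring of the 5-cycle avoiding cz
  set f : Fin 5 → Fin 3 :=
    fun i => if c (.inl i) = cz then c (.inr (.inl i)) else c (.inl i) with hf
  have hA : ∀ i : Fin 5, f i ≠ cz := by
    intro i
    by_cases h : c (.inl i) = cz
    · simpa [hf, h] using fun h2 => (c.valid (adj_wz i)) h2
    · simp [hf, h]
  have hB : ∀ i : Fin 5, f i ≠ f (i + 1) := by
    intro i
    by_cases h1 : c (.inl i) = cz <;> by_cases h2 : c (.inl (i + 1)) = cz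
    · exact absurd (h1.trans h2.symm) (c.valid (adj_vv i))
    · simpa [hf, h1, h2] using c.valid (adj_wv i)
    · simpa [hf, h1, h2] using fun h3 => (c.valid (adj_wv' i)) h3.symm
    · simpa [hf, h1, h2] using c.valid (adj_vv i)
  have h0 := hB 0; have h1 := hB 1; have h2 := hB 2; have h3 := hB 3; have h4 := hB 4
  norm_num at h0 h1 h2 h3 h4
  exact c5_no_two_coloring (f 0) (f 1) (f 2) (f 3) (f 4) cz
    ⟨hA 0, hA 1, hA 2, hA 3, hA 4, h0, h1, h2, h3, h4⟩

lemma no_triangle : ∀ a b c : GVert,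
    ¬(gAdj a b = true ∧ gAdj a c = true ∧ gAdj b c = true) := by decide

/-- The Grötzsch graph is triangle-free and has chromatic number exactly 4. -/
theorem stmt2 : grotzsch.CliqueFree 3 ∧ grotzsch.chromaticNumber = 4 := by
  constructor
  · intro t ht
    obtain ⟨a, b, d, hab, had, hbd, -⟩ := is3Clique_iff.mp ht
    exact no_triangle a b d ⟨hab, had, hbd⟩
  · apply le_antisymm
    · have := grotzsch_colorable.chromaticNumber_le
      simpa using this
    · by_contra h
      push_neg at h
      have h4 : grotzsch.chromaticNumber ≤ 3 := by
        have : grotzsch.chromaticNumber < 4 := h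
        exact Order.le_of_lt_add_one (by norm_num at this ⊢; exact this)
      exact grotzsch_not_colorable
        ((chromaticNumber_le_iff_colorable (n := 3)).mp (by simpa using h4))
end

section
/- Let G be an n-vertex triangle-free graph with e(G) ≥ (n−4)²/4, and let S = {v ∈ V(G) : d_G(v) ≤ (2/5)n}. Then |S| ≤ 20 for n sufficiently large. -/
/-!
Pick 21 vertices of degree at most `2n/5`. Deleting them destroys at most `21 · 2n/5` edges and
leaves a triangle-free graph on `n - 21` vertices, which by Mantel's theorem has at most
`(n - 21)²/4` edges. Hence `(n - 4)²/4 ≤ (n - 21)²/4 + 42n/5`, i.e. `2n ≤ 2125`.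
-/

open Finset

namespace SimpleGraph

variable {V : Type*} [Fintype V] {G : SimpleGraph V} [DecidableRel G.Adj]

theorem CliqueFree.four_mul_card_edgeFinset_le (hG : G.CliqueFree 3) :
    4 * #G.edgeFinset ≤ Fintype.card V ^ 2 := by
  have hmod : (Fintype.card V % 2).choose 2 = 0 :=
    Nat.choose_eq_zero_of_lt (Nat.mod_lt _ two_pos)
  have := hG.card_edgeFinset_le (r := 2)
  simp only [hmod, add_zero, Nat.add_one_sub_one, mul_one] at this
  calc 4 * #G.edgeFinset
      ≤ 4 * ((Fintype.card V ^ 2 - (Fintype.card V % 2) ^ 2) / 4) := by gcongr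
    _ ≤ Fintype.card V ^ 2 - (Fintype.card V % 2) ^ 2 := Nat.mul_div_le _ _
    _ ≤ Fintype.card V ^ 2 := Nat.sub_le _ _

theorem card_edgeFinset_le_card_edgeFinset_induce_compl_add_sum_degree [DecidableEq V]
    (G : SimpleGraph V) [DecidableRel G.Adj] (T : Finset V) :
    #G.edgeFinset ≤ #(G.induce (↑T)ᶜ).edgeFinset + ∑ v ∈ T, G.degree v := by
  have hinduce : #(G.induce (↑T)ᶜ).edgeFinset = #(G.edgeFinset ∩ Tᶜ.sym2) := by
    rw [← card_map, map_edgeFinset_induce, Set.toFinset_compl, Finset.toFinset_coe]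
  have hrest : G.edgeFinset \ Tᶜ.sym2 ⊆ T.biUnion fun v => G.incidenceFinset v := by
    intro e he
    obtain ⟨heG, heT⟩ := mem_sdiff.mp he
    obtain ⟨v, hve, hvT⟩ : ∃ v ∈ e, v ∈ T := by simpa [mem_sym2_iff] using heT
    exact mem_biUnion.mpr ⟨v, hvT, (mem_incidenceFinset _ _ _).mpr ⟨mem_edgeFinset.mp heG, hve⟩⟩
  calc #G.edgeFinset
      = #(G.edgeFinset ∩ Tᶜ.sym2) + #(G.edgeFinset \ Tᶜ.sym2) :=
        (card_inter_add_card_sdiff _ _).symm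
    _ ≤ #(G.induce (↑T)ᶜ).edgeFinset + ∑ v ∈ T, #(G.incidenceFinset v) := by
        rw [hinduce]
        exact add_le_add_right ((card_le_card hrest).trans card_biUnion_le) _
    _ = #(G.induce (↑T)ᶜ).edgeFinset + ∑ v ∈ T, G.degree v := by
        simp only [card_incidenceFinset_eq_degree]

theorem CliqueFree.card_edgeFinset_le_of_degree_le [DecidableEq V] (hG : G.CliqueFree 3)
    (T : Finset V) {d : ℝ} (hT : ∀ v ∈ T, (G.degree v : ℝ) ≤ d) :
    (#G.edgeFinset : ℝ) ≤ ((Fintype.card V : ℝ) - #T) ^ 2 / 4 + #T * d := by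
  have hinduce : 4 * #(G.induce (↑T)ᶜ).edgeFinset ≤ (Fintype.card V - #T) ^ 2 := by
    have := (hG.comap ⟨(Embedding.induce (↑T : Set V)ᶜ).toCopy⟩).four_mul_card_edgeFinset_le
    rw [Fintype.card_compl_set] at this
    convert this using 3
    simp
  have hinduceR : 4 * (#(G.induce (↑T)ᶜ).edgeFinset : ℝ) ≤ ((Fintype.card V : ℝ) - #T) ^ 2 := by
    rw [← Nat.cast_sub (card_le_univ T)]
    exact_mod_cast hinduce
  have hdeg : ∑ v ∈ T, (G.degree v : ℝ) ≤ #T * d := by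
    simpa using sum_le_card_nsmul T _ d hT
  have hdelete :
      (#G.edgeFinset : ℝ) ≤ #(G.induce (↑T)ᶜ).edgeFinset + ∑ v ∈ T, (G.degree v : ℝ) :=
    mod_cast G.card_edgeFinset_le_card_edgeFinset_induce_compl_add_sum_degree T
  linarith

end SimpleGraph

/-- For sufficiently large `n`, an `n`-vertex triangle-free graph with at least
`(n−4)²/4` edges has at most 20 vertices of degree at most `2n/5`. -/
theorem stmt9 :
    ∃ N : ℕ, ∀ (V : Type) [Fintype V] [DecidableEq V] (G : SimpleGraph V)
      [DecidableRel G.Adj],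
      N ≤ Fintype.card V → G.CliqueFree 3 →
      ((Fintype.card V : ℝ) - 4) ^ 2 / 4 ≤ (G.edgeFinset.card : ℝ) →
      (Finset.univ.filter fun v =>
          (G.degree v : ℝ) ≤ 2 / 5 * (Fintype.card V : ℝ)).card ≤ 20 := by
  refine ⟨1063, fun V _ _ G _ hn hG hedges => ?_⟩
  by_contra! hlow
  obtain ⟨T, hTlow, hT⟩ := exists_subset_card_eq hlow
  have hupper := hG.card_edgeFinset_le_of_degree_le T fun v hv => (mem_filter.mp (hTlow hv)).2
  have hnR : (1063 : ℝ) ≤ Fintype.card V := mod_cast hn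
  rw [hT] at hupper
  push_cast at hupper
  linarith
end

section
/- Let G be a graph with Perron eigenvector x (positive unit eigenvector for ρ(G)), and let u, v be vertices with x_u ≥ x_v and N_G(u) ≠ N_G(v), v ∉ N_G(u). Let G' be obtained from G by deleting all edges at v and joining v to N_G(u) \ {v}. Then ρ(G') > ρ(G). -/
/-!
Write `A`, `A'` for the adjacency matrices of `G` and of the rewired graph, `r = ρ(G)` and
`c = A u - A v` (row `u` minus row `v`). Since `v ∉ N(u)`, `A'` is `A` with row and column `v`
replaced by `c`, so `xᵀA'x = xᵀAx + 2 x_v (c ⬝ x) = r + 2 r x_v (x_u - x_v) ≥ r`.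
If `x_u > x_v` this is already `> r`. If `x_u = x_v`, then `x` attains `r` in the Rayleigh quotient
of `A'` but is not an eigenvector of `A'`: at a vertex `w` adjacent to exactly one of `u`, `v`
we get `(A'x)_w = r x_w ± x_v`. Moving `x` a little along `A'x - r x` then raises the quotient.
-/

open Matrix Finset SimpleGraph
open scoped Classical

/-- The graph obtained from `G` by deleting all edges at `v` and joining `v`
to `N_G(u) \ {v}`. -/
def rewire {V : Type*} (G : SimpleGraph V) (u v : V) : SimpleGraph V where
  Adj a b := (a ≠ v ∧ b ≠ v ∧ G.Adj a b) ∨ (a = v ∧ b ≠ v ∧ G.Adj u b) ∨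
    (b = v ∧ a ≠ v ∧ G.Adj u a)
  symm := by
    constructor
    intro a b h
    rcases h with ⟨h1, h2, h3⟩ | ⟨h1, h2, h3⟩ | ⟨h1, h2, h3⟩
    · exact Or.inl ⟨h2, h1, h3.symm⟩
    · exact Or.inr (Or.inr ⟨h1, h2, h3⟩)
    · exact Or.inr (Or.inl ⟨h1, h2, h3⟩)
  loopless := by
    constructor
    intro a h
    rcases h with ⟨h1, h2, h3⟩ | ⟨h1, h2, h3⟩ | ⟨h1, h2, h3⟩
    · exact G.loopless.irrefl a h3
    · exact h2 h1
    · exact h2 h1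

lemma exists_two_mul_mul_add_sq_mul_pos {D : ℝ} (hD : 0 < D) (M : ℝ) :
    ∃ t : ℝ, 0 < 2 * t * D + t ^ 2 * M := by
  refine ⟨D / (|M| + 1), ?_⟩
  have h1 : 0 < |M| + 1 := by positivity
  have ht : 0 < D / (|M| + 1) := div_pos hD h1
  have htM : D / (|M| + 1) * |M| < D := by
    rw [div_mul_eq_mul_div, div_lt_iff₀ h1]; nlinarith
  nlinarith [neg_abs_le M]

lemma exists_lt_dotProduct_mulVec_of_not_eigenvector {n : Type*} [Fintype n]
    {B : Matrix n n ℝ} (hB : B.IsSymm) {x : n → ℝ} (hx : x ⬝ᵥ x = 1)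
    (hxB : B *ᵥ x ≠ (x ⬝ᵥ B *ᵥ x) • x) :
    ∃ y : n → ℝ, (x ⬝ᵥ B *ᵥ x) * (y ⬝ᵥ y) < y ⬝ᵥ B *ᵥ y := by
  set r := x ⬝ᵥ B *ᵥ x
  set d := B *ᵥ x - r • x
  have hBx : B *ᵥ x = d + r • x := by simp [d]
  have hdx : d ⬝ᵥ x = 0 := by
    simp [d, sub_dotProduct, dotProduct_comm (B *ᵥ x), r, hx]
  have hD : 0 < d ⬝ᵥ d := dotProduct_self_star_pos_iff.mpr (sub_ne_zero.mpr hxB)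
  have hdBx : d ⬝ᵥ B *ᵥ x = d ⬝ᵥ d := by simp [hBx, dotProduct_add, hdx]
  have hxBd : x ⬝ᵥ B *ᵥ d = d ⬝ᵥ d := by
    rw [dotProduct_mulVec, ← mulVec_transpose, hB.eq, dotProduct_comm, hdBx]
  obtain ⟨t, ht⟩ := exists_two_mul_mul_add_sq_mul_pos hD (d ⬝ᵥ B *ᵥ d - r * (d ⬝ᵥ d))
  refine ⟨x + t • d, ?_⟩
  have hnorm : (x + t • d) ⬝ᵥ (x + t • d) = 1 + t ^ 2 * (d ⬝ᵥ d) := by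
    simp only [add_dotProduct, dotProduct_add, smul_dotProduct, dotProduct_smul, hx, hdx,
      dotProduct_comm x d, smul_eq_mul]
    ring
  have hquad : (x + t • d) ⬝ᵥ B *ᵥ (x + t • d) = r + 2 * t * (d ⬝ᵥ d) + t ^ 2 * (d ⬝ᵥ B *ᵥ d) := by
    simp only [mulVec_add, mulVec_smul, add_dotProduct, dotProduct_add, smul_dotProduct,
      dotProduct_smul, hxBd, hdBx, smul_eq_mul]
    ring
  rw [hnorm, hquad]
  linarith

section SpectralRadius

variable {V : Type*} [Fintype V]

lemma dotProduct_adjMatrix_mulVec_le_card (G : SimpleGraph V) (z : V → ℝ)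
    (hz : ∑ a, z a ^ 2 = 1) :
    z ⬝ᵥ (G.adjMatrix ℝ *ᵥ z) ≤ Fintype.card V :=
  calc z ⬝ᵥ (G.adjMatrix ℝ *ᵥ z)
      = ∑ a, ∑ b, z a * (G.adjMatrix ℝ a b * z b) := by
        simp [dotProduct, mulVec, Finset.mul_sum]
    _ ≤ ∑ a, ∑ b, |z a| * |z b| := by
        refine Finset.sum_le_sum fun a _ => Finset.sum_le_sum fun b _ => ?_
        by_cases h : G.Adj a b
        · simpa [h, abs_mul] using le_abs_self (z a * z b)
        · simp only [adjMatrix_apply, if_neg h, zero_mul, mul_zero]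
          positivity
    _ = (∑ a, |z a|) ^ 2 := by rw [sq, Finset.sum_mul_sum]
    _ ≤ Fintype.card V * ∑ a, |z a| ^ 2 := by
        simpa using sq_sum_le_card_mul_sum_sq (s := Finset.univ) (f := fun a => |z a|)
    _ = Fintype.card V := by simp [sq_abs, hz]

lemma dotProduct_adjMatrix_mulVec_le_specRad (G : SimpleGraph V) (y : V → ℝ)
    (hy : ∑ w, y w ^ 2 = 1) :
    y ⬝ᵥ (G.adjMatrix ℝ *ᵥ y) ≤ specRad G :=
  le_ciSup (f := fun x : {x : V → ℝ // ∑ v, x v ^ 2 = 1} => x.1 ⬝ᵥ (G.adjMatrix ℝ *ᵥ x.1))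
    ⟨Fintype.card V, by
      rintro r ⟨⟨z, hz⟩, rfl⟩
      exact dotProduct_adjMatrix_mulVec_le_card G z hz⟩ ⟨y, hy⟩

lemma dotProduct_adjMatrix_mulVec_le_specRad_mul (G : SimpleGraph V) (y : V → ℝ) :
    y ⬝ᵥ (G.adjMatrix ℝ *ᵥ y) ≤ specRad G * (y ⬝ᵥ y) := by
  rcases eq_or_ne y 0 with rfl | hy
  · simp
  set n := y ⬝ᵥ y
  have hn : 0 < n := dotProduct_self_star_pos_iff.mpr hy
  have hsq : (√n)⁻¹ ^ 2 = n⁻¹ := by rw [inv_pow, Real.sq_sqrt hn.le]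
  have hunit : ∑ w, ((√n)⁻¹ • y) w ^ 2 = 1 := by
    simp only [Pi.smul_apply, smul_eq_mul, mul_pow, ← Finset.mul_sum, hsq]
    simpa [n, dotProduct, sq] using inv_mul_cancel₀ hn.ne'
  have := dotProduct_adjMatrix_mulVec_le_specRad G _ hunit
  rw [mulVec_smul, smul_dotProduct, dotProduct_smul, smul_eq_mul, smul_eq_mul, ← mul_assoc,
    ← sq, hsq, inv_mul_le_iff₀ hn, mul_comm n] at this
  exact this

lemma lt_specRad_of_mul_lt (G : SimpleGraph V) (r : ℝ) (y : V → ℝ)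
    (h : r * (y ⬝ᵥ y) < y ⬝ᵥ (G.adjMatrix ℝ *ᵥ y)) : r < specRad G :=
  lt_of_mul_lt_mul_right (h.trans_le (dotProduct_adjMatrix_mulVec_le_specRad_mul G y))
    (Finset.sum_nonneg fun _ _ => mul_self_nonneg _)

lemma pos_of_adjMatrix_mulVec_eq_smul (G : SimpleGraph V) [DecidableRel G.Adj] {x : V → ℝ}
    (hpos : ∀ w, 0 < x w) {r : ℝ}
    (heig : G.adjMatrix ℝ *ᵥ x = r • x) {a b : V} (hab : G.Adj a b) : 0 < r := by
  have hle : x b ≤ r * x a := by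
    rw [← smul_eq_mul, ← Pi.smul_apply, ← heig, adjMatrix_mulVec_apply]
    exact Finset.single_le_sum (fun w _ => (hpos w).le) ((mem_neighborFinset G a b).mpr hab)
  exact pos_of_mul_pos_left ((hpos b).trans_le hle) (hpos a).le

end SpectralRadius

section Rewire

variable {V : Type*} (G : SimpleGraph V) [DecidableRel G.Adj] {u v : V}

lemma adjMatrix_rewire_apply (huv : ¬ G.Adj u v) (a b : V) :
    (rewire G u v).adjMatrix ℝ a b = G.adjMatrix ℝ a b
      + (if a = v then (G.adjMatrix ℝ u - G.adjMatrix ℝ v) b else 0)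
      + (if b = v then (G.adjMatrix ℝ u - G.adjMatrix ℝ v) a else 0) := by
  simp only [Pi.sub_apply, adjMatrix_apply]
  by_cases ha : a = v <;> by_cases hb : b = v <;> subst_vars
  all_goals simp [rewire, G.adj_comm, *]

variable [Fintype V]

lemma adjMatrix_rewire_mulVec (huv : ¬ G.Adj u v) (z : V → ℝ) :
    (rewire G u v).adjMatrix ℝ *ᵥ z = G.adjMatrix ℝ *ᵥ z
      + Pi.single v ((G.adjMatrix ℝ u - G.adjMatrix ℝ v) ⬝ᵥ z)
      + z v • (G.adjMatrix ℝ u - G.adjMatrix ℝ v) := by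
  ext a
  simp only [mulVec, dotProduct, adjMatrix_rewire_apply G huv, add_mul, Finset.sum_add_distrib,
    Pi.add_apply, Pi.single_apply, Pi.smul_apply, smul_eq_mul]
  split_ifs <;> simp [*, mul_comm]

lemma dotProduct_adjMatrix_rewire_mulVec (huv : ¬ G.Adj u v) (z : V → ℝ) :
    z ⬝ᵥ (rewire G u v).adjMatrix ℝ *ᵥ z
      = z ⬝ᵥ G.adjMatrix ℝ *ᵥ z + 2 * z v * ((G.adjMatrix ℝ *ᵥ z) u - (G.adjMatrix ℝ *ᵥ z) v) := by
  have hc : (G.adjMatrix ℝ u - G.adjMatrix ℝ v) ⬝ᵥ z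
      = (G.adjMatrix ℝ *ᵥ z) u - (G.adjMatrix ℝ *ᵥ z) v := by
    rw [sub_dotProduct]; rfl
  rw [adjMatrix_rewire_mulVec G huv, dotProduct_add, dotProduct_add, dotProduct_single,
    dotProduct_smul, dotProduct_comm z (_ - _), hc, smul_eq_mul]
  ring

lemma adjMatrix_rewire_mulVec_ne_smul (huv : ¬ G.Adj u v) {x : V → ℝ} (hxv : x v ≠ 0) {r : ℝ}
    (heig : G.adjMatrix ℝ *ᵥ x = r • x) {w : V} (hw : ¬(G.Adj u w ↔ G.Adj v w)) :
    (rewire G u v).adjMatrix ℝ *ᵥ x ≠ r • x := by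
  have hwv : w ≠ v := by
    rintro rfl
    exact hw (iff_of_false huv (G.loopless.irrefl w))
  have hcw : G.adjMatrix ℝ u w - G.adjMatrix ℝ v w ≠ 0 := by
    simp only [adjMatrix_apply]
    split_ifs <;> norm_num <;> tauto
  intro h
  have hxw := congrFun h w
  rw [adjMatrix_rewire_mulVec G huv, heig] at hxw
  simp only [Pi.add_apply, Pi.smul_apply, Pi.single_eq_of_ne hwv, Pi.sub_apply,
    smul_eq_mul] at hxw
  exact mul_ne_zero hxv hcw (by linarith)

end Rewire

theorem stmt14_general {V : Type*} [Fintype V] (G : SimpleGraph V) [DecidableRel G.Adj]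
    (x : V → ℝ) (hpos : ∀ w, 0 < x w)
    (hunit : ∑ w, x w ^ 2 = 1)
    (heig : (G.adjMatrix ℝ).mulVec x = specRad G • x)
    (u v : V) (hxy : x v ≤ x u) (hN : G.neighborSet u ≠ G.neighborSet v)
    (hv : ¬ G.Adj u v) :
    specRad G < specRad (rewire G u v) := by
  set r := specRad G
  have hx : x ⬝ᵥ x = 1 := by simpa [dotProduct, sq] using hunit
  have hquad : x ⬝ᵥ (rewire G u v).adjMatrix ℝ *ᵥ x = r + 2 * x v * (r * x u - r * x v) := by
    rw [dotProduct_adjMatrix_rewire_mulVec G hv, heig]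
    simp [dotProduct_smul, hx]
  obtain ⟨w, hw⟩ : ∃ w, ¬(G.Adj u w ↔ G.Adj v w) := by
    by_contra! h
    exact hN (Set.ext h)
  obtain ⟨a, haw⟩ : ∃ a, G.Adj a w := by
    by_cases huw : G.Adj u w
    exacts [⟨u, huw⟩, ⟨v, by tauto⟩]
  have hr : 0 < r := pos_of_adjMatrix_mulVec_eq_smul G hpos heig haw
  rcases hxy.lt_or_eq with hlt | heq
  · refine lt_specRad_of_mul_lt _ r x ?_
    rw [hx, hquad]
    nlinarith [mul_pos (hpos v) (mul_pos hr (sub_pos.mpr hlt))]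
  · have hquad' : x ⬝ᵥ (rewire G u v).adjMatrix ℝ *ᵥ x = r := by rw [hquad, heq]; ring
    have hne := adjMatrix_rewire_mulVec_ne_smul G hv (hpos v).ne' heig hw
    rw [← hquad'] at hne
    obtain ⟨y, hy⟩ := exists_lt_dotProduct_mulVec_of_not_eigenvector (isSymm_adjMatrix _) hx hne
    exact lt_specRad_of_mul_lt _ r y (hquad' ▸ hy)

/-- If `x` is the positive unit Perron eigenvector of a connected graph `G`,
`x_v ≤ x_u`, `N(u) ≠ N(v)` and `v ∉ N(u)`, then rewiring `v` onto the
neighborhood of `u` strictly increases the spectral radius. -/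
theorem stmt14 {V : Type*} [Fintype V] (G : SimpleGraph V) [DecidableRel G.Adj]
    (hconn : G.Connected) (x : V → ℝ) (hpos : ∀ w, 0 < x w)
    (hunit : ∑ w, x w ^ 2 = 1)
    (heig : (G.adjMatrix ℝ).mulVec x = specRad G • x)
    (u v : V) (hxy : x v ≤ x u) (hN : G.neighborSet u ≠ G.neighborSet v)
    (hv : ¬ G.Adj u v) :
    specRad G < specRad (rewire G u v) :=
  stmt14_general G x hpos hunit heig u v hxy hN hv
end

section
/- Let G be a connected graph with spectral radius ρ and positive unit Perron eigenvector x, with maximum entry at u*. If every vertex u in some set V₁' ⊆ V(G) satisfies |N_G(u*) \ N_G(u)| ≤ 10 and ρ ≥ 20, then x_u ≥ (1/2)·x_{u*} for all u ∈ V₁'. Moreover, if |V₁'| ≥ n/3 then x_{u*}² ≤ 12/n. -/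
open Matrix Finset SimpleGraph
open scoped Classical

/-!
Comparing the eigen-equations `ρ x_a = Σ_{N(a)} x` and `ρ x_b = Σ_{N(b)} x`, the common
neighbours cancel (up to a nonnegative excess on the side of `b`), so
`ρ (x_a - x_b) ≤ |N(a) \ N(b)| · x_a` when `x_a` is the maximal entry. With `|N(a) \ N(b)| ≤ 10`
and `ρ ≥ 20` this forces `x_b ≥ x_a / 2`; if this holds on a third of the vertices, then
`1 = Σ x² ≥ (n/3)(x_a/2)²`.
-/

namespace SimpleGraph

variable {V : Type*} [Fintype V] (G : SimpleGraph V) [DecidableRel G.Adj]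
  {x : V → ℝ} {ρ : ℝ}

theorem mul_apply_eq_sum_neighborFinset_of_mulVec_eq_smul (heig : G.adjMatrix ℝ *ᵥ x = ρ • x)
    (v : V) : ρ * x v = ∑ w ∈ G.neighborFinset v, x w := by
  rw [← adjMatrix_mulVec_apply, heig, Pi.smul_apply, smul_eq_mul]

theorem mul_sub_le_card_sdiff_mul_of_mulVec_eq_smul [DecidableEq V]
    (heig : G.adjMatrix ℝ *ᵥ x = ρ • x) (hnonneg : ∀ w, 0 ≤ x w) {a : V} (hmax : ∀ w, x w ≤ x a)
    (b : V) :
    ρ * (x a - x b) ≤ #(G.neighborFinset a \ G.neighborFinset b) * x a := by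
  have hsplit := sum_inter_add_sum_sdiff (G.neighborFinset a) (G.neighborFinset b) x
  have hcommon : ∑ w ∈ G.neighborFinset a ∩ G.neighborFinset b, x w
      ≤ ∑ w ∈ G.neighborFinset b, x w :=
    sum_le_sum_of_subset_of_nonneg inter_subset_right fun w _ _ ↦ hnonneg w
  have hexcess : ∑ w ∈ G.neighborFinset a \ G.neighborFinset b, x w
      ≤ #(G.neighborFinset a \ G.neighborFinset b) * x a := by
    simpa only [nsmul_eq_mul] using sum_le_card_nsmul _ _ _ fun w _ ↦ hmax w
  rw [mul_sub, G.mul_apply_eq_sum_neighborFinset_of_mulVec_eq_smul heig,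
    G.mul_apply_eq_sum_neighborFinset_of_mulVec_eq_smul heig]
  linarith

theorem half_le_of_card_sdiff_le [DecidableEq V] (heig : G.adjMatrix ℝ *ᵥ x = ρ • x)
    (hnonneg : ∀ w, 0 ≤ x w) {a : V} (hmax : ∀ w, x w ≤ x a) {b : V} {k : ℝ}
    (hk : #(G.neighborFinset a \ G.neighborFinset b) ≤ k) (hρ : 2 * k ≤ ρ) (hρpos : 0 < ρ) :
    x a / 2 ≤ x b := by
  have hdiff := G.mul_sub_le_card_sdiff_mul_of_mulVec_eq_smul heig hnonneg hmax b
  have hab : 0 ≤ x a - x b := sub_nonneg.mpr (hmax b)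
  nlinarith [hnonneg a, hnonneg b, mul_le_mul_of_nonneg_right hk (hnonneg a),
    mul_le_mul_of_nonneg_right hρ hab]

end SimpleGraph

theorem card_mul_sq_le_of_le_of_sum_sq_eq_one {ι : Type*} [Fintype ι] {x : ι → ℝ}
    (hunit : ∑ i, x i ^ 2 = 1) {s : Finset ι} {c : ℝ} (hc : 0 ≤ c) (hle : ∀ i ∈ s, c ≤ x i) :
    #s * c ^ 2 ≤ 1 := by
  calc (#s : ℝ) * c ^ 2 = #s • c ^ 2 := (nsmul_eq_mul _ _).symm
    _ ≤ ∑ i ∈ s, x i ^ 2 := card_nsmul_le_sum _ _ _ fun i hi ↦ pow_le_pow_left₀ hc (hle i hi) 2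
    _ ≤ ∑ i, x i ^ 2 := sum_le_sum_of_subset_of_nonneg (subset_univ _) fun i _ _ ↦ sq_nonneg _
    _ = 1 := hunit

theorem stmt15_general {V : Type*} [Fintype V] [DecidableEq V] (G : SimpleGraph V)
    [DecidableRel G.Adj] (x : V → ℝ) (hpos : ∀ w, 0 < x w)
    (hunit : ∑ w, x w ^ 2 = 1)
    (heig : (G.adjMatrix ℝ).mulVec x = specRad G • x)
    (ustar : V) (hmax : ∀ w, x w ≤ x ustar)
    (V₁' : Finset V)
    (hdiff : ∀ u ∈ V₁', ((G.neighborFinset ustar \ G.neighborFinset u).card : ℝ) ≤ 10)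
    (hrho : 20 ≤ specRad G) :
    (∀ u ∈ V₁', x ustar / 2 ≤ x u) ∧
    ((Fintype.card V : ℝ) / 3 ≤ (V₁'.card : ℝ) →
      x ustar ^ 2 ≤ 12 / (Fintype.card V : ℝ)) := by
  have hnonneg : ∀ w, 0 ≤ x w := fun w ↦ (hpos w).le
  have hhalf : ∀ u ∈ V₁', x ustar / 2 ≤ x u := fun u hu ↦
    G.half_le_of_card_sdiff_le heig hnonneg hmax (hdiff u hu) (by linarith) (by linarith)
  refine ⟨hhalf, fun hcard ↦ ?_⟩
  have hn : 0 < (Fintype.card V : ℝ) := Nat.cast_pos.mpr (Fintype.card_pos_iff.mpr ⟨ustar⟩)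
  have hsum :=
    card_mul_sq_le_of_le_of_sum_sq_eq_one hunit (div_nonneg (hnonneg ustar) zero_le_two) hhalf
  rw [le_div_iff₀ hn]
  nlinarith [sq_nonneg (x ustar)]

/-- If `x` is the positive unit Perron eigenvector of a connected graph `G` with
maximum entry at `u*`, every `u ∈ V₁'` satisfies `|N(u*) \ N(u)| ≤ 10`, and
`ρ ≥ 20`, then `x_u ≥ x_{u*}/2` on `V₁'`; moreover if `|V₁'| ≥ n/3` then
`x_{u*}² ≤ 12/n`. -/
theorem stmt15 {V : Type*} [Fintype V] [DecidableEq V] (G : SimpleGraph V)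
    [DecidableRel G.Adj] (hconn : G.Connected) (x : V → ℝ) (hpos : ∀ w, 0 < x w)
    (hunit : ∑ w, x w ^ 2 = 1)
    (heig : (G.adjMatrix ℝ).mulVec x = specRad G • x)
    (ustar : V) (hmax : ∀ w, x w ≤ x ustar)
    (V₁' : Finset V)
    (hdiff : ∀ u ∈ V₁', ((G.neighborFinset ustar \ G.neighborFinset u).card : ℝ) ≤ 10)
    (hrho : 20 ≤ specRad G) :
    (∀ u ∈ V₁', x ustar / 2 ≤ x u) ∧
    ((Fintype.card V : ℝ) / 3 ≤ (V₁'.card : ℝ) →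
      x ustar ^ 2 ≤ 12 / (Fintype.card V : ℝ)) :=
  stmt15_general G x hpos hunit heig ustar hmax V₁' hdiff hrho
end
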